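/- arXiv:2405.04034 — 3 statements merged into one kernel-verified Lean document; each statement's English description precedes it below -/
import Mathlib

section
/- Let X₁, …, X_k be independent Laplace(0,1) random variables and let β ∈ (0,1). Then with probability at least 1 − β, |Σ_{j=1}^k X_j| ≤ 2√k · ln(2k/β). -/
open MeasureTheory ProbabilityTheory Real Set Filter
open scoped ENNReal Topology


lemma myint_Ioi (b : ℝ) (hb : 0 < b) :
    ∫ x in Ioi (0:ℝ), Real.exp (-b * x) = 1 / b := by
  have hderiv : ∀ x ∈ Ici (0:ℝ), HasDerivAt (fun x => -Real.exp (-b * x) / b)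
      (Real.exp (-b * x)) x := by
    intro x _
    simpa [hb.ne'] using ((hasDerivAt_id x).const_mul b).neg.exp.neg.div_const b
  have htend : Tendsto (fun x => -Real.exp (-b * x) / b) atTop (𝓝 (-0 / b)) := by
    refine Tendsto.div_const (Tendsto.neg ?_) _
    exact Real.tendsto_exp_atBot.comp (tendsto_id.const_mul_atTop_of_neg (neg_neg_iff_pos.2 hb))
  have := integral_Ioi_of_hasDerivAt_of_tendsto' hderiv (exp_neg_integrableOn_Ioi 0 hb) htend
  rw [this]
  field_simp
  simp

lemma myint_Iic (b : ℝ) (hb : 0 < b) :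
    ∫ x in Iic (0:ℝ), Real.exp (b * x) = 1 / b := by
  have : ∫ x in Iic (0:ℝ), Real.exp (b * x) = ∫ x in Ioi (-(0:ℝ)), Real.exp (-b * x) := by
    rw [← integral_comp_neg_Iic]
    congr 1 with x
    ring_nf
  rw [this, neg_zero, myint_Ioi b hb]

lemma mylint_Ioi (b : ℝ) (hb : 0 < b) :
    ∫⁻ x in Ioi (0:ℝ), ENNReal.ofReal ((1/2) * Real.exp (-b * x)) = ENNReal.ofReal (1/(2*b)) := by
  rw [← ofReal_integral_eq_lintegral_ofReal]
  · rw [integral_const_mul, myint_Ioi b hb]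
    norm_num
    rw [← ENNReal.ofReal_mul (by norm_num)]
    ring_nf
  · exact ((exp_neg_integrableOn_Ioi 0 hb).const_mul _)
  · filter_upwards with x
    positivity

lemma mylint_Iic (b : ℝ) (hb : 0 < b) :
    ∫⁻ x in Iic (0:ℝ), ENNReal.ofReal ((1/2) * Real.exp (b * x)) = ENNReal.ofReal (1/(2*b)) := by
  have hneg : Measurable (fun x : ℝ => -x) := measurable_neg
  have h1 : (volume : Measure ℝ).restrict (Iic (0:ℝ))
      = Measure.map (fun x : ℝ => -x) ((volume : Measure ℝ).restrict (Ici (0:ℝ))) := by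
    rw [show Ici (0:ℝ) = (fun x : ℝ => -x) ⁻¹' (Iic 0) by ext x; simp,
      ← Measure.restrict_map hneg measurableSet_Iic, Measure.map_neg_eq_self]
  rw [h1, lintegral_map (by fun_prop) hneg]
  simp only [mul_neg]
  have : ∀ x : ℝ, ENNReal.ofReal ((1/2) * Real.exp (-(b * x)))
      = ENNReal.ofReal ((1/2) * Real.exp (-b * x)) := by intro x; ring_nf
  simp_rw [this]
  rw [setLIntegral_congr (Ioi_ae_eq_Ici (a := (0:ℝ))).symm, mylint_Ioi b hb]

lemma laplace_mgf (c d : ℝ) (hc : c < 1) (hd : -1 < d) :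
    ∫⁻ x : ℝ, ENNReal.ofReal ((1/2) * Real.exp (-|x|) * Real.exp (if 0 < x then c * x else d * x))
      = ENNReal.ofReal (1/(2*(1-c))) + ENNReal.ofReal (1/(2*(1+d))) := by
  rw [← lintegral_add_compl (μ := volume)
    (fun x : ℝ => ENNReal.ofReal ((1/2) * Real.exp (-|x|) * Real.exp (if 0 < x then c * x else d * x)))
    (measurableSet_Ioi (a := (0:ℝ)))]
  rw [compl_Ioi]
  congr 1
  · rw [setLIntegral_congr_fun (measurableSet_Ioi)
      (fun x (hx : x ∈ Ioi (0:ℝ)) => ?_), mylint_Ioi (1 - c) (by linarith)]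
    rw [abs_of_pos hx, if_pos hx.out, mul_assoc, ← Real.exp_add]
    ring_nf
  · rw [setLIntegral_congr_fun (measurableSet_Iic)
      (fun x (hx : x ∈ Iic (0:ℝ)) => ?_), mylint_Iic (1 + d) (by linarith)]
    rw [abs_of_nonpos hx, if_neg (by simpa using hx.out), neg_neg, mul_assoc, ← Real.exp_add]
    ring_nf

lemma mylintegral_pi_prod (μ : Measure ℝ) [SigmaFinite μ] (f : ℝ → ℝ≥0∞) (hf : Measurable f) :
    ∀ (k : ℕ), ∫⁻ x : Fin k → ℝ, ∏ i, f (x i) ∂(Measure.pi fun _ => μ)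
      = (∫⁻ x, f x ∂μ) ^ k := by
  intro k
  induction k with
  | zero => simp [Measure.pi_empty_univ]
  | succ n ih =>
    have hp := (measurePreserving_piFinSuccAbove (fun _ : Fin (n+1) => μ) 0).symm
    rw [← hp.lintegral_comp_emb (MeasurableEquiv.measurableEmbedding _)]
    simp_rw [MeasurableEquiv.piFinSuccAbove_symm_apply, Fin.insertNthEquiv,
      Fin.prod_univ_succ, Fin.insertNth_zero]
    simp only [Fin.zero_succAbove, Nat.cast_id, Function.comp_def, Fin.cons_zero, Fin.cons_succ,
      Equiv.coe_fn_mk, cast_eq]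
    calc ∫⁻ (a : ℝ × (Fin n → ℝ)), f a.1 * ∏ x : Fin n, f (a.2 x)
          ∂μ.prod (Measure.pi fun _ => μ)
        = (∫⁻ x, f x ∂μ) * ∫⁻ (y : Fin n → ℝ), ∏ i, f (y i) ∂(Measure.pi fun _ => μ) :=
          lintegral_prod_mul (hf.aemeasurable)
            ((Finset.measurable_prod _ (fun j _ => hf.comp (measurable_pi_apply j))).aemeasurable)
      _ = (∫⁻ x, f x ∂μ) ^ (n + 1) := by rw [ih, pow_succ]; ring

/-- The Laplace distribution on `ℝ` with location `0` and scale `b`, given by the density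
`x ↦ (1/(2b)) exp(−|x|/b)` with respect to Lebesgue measure. -/
noncomputable def laplaceMeasure (b : ℝ) : Measure ℝ :=
  volume.withDensity fun x => ENNReal.ofReal ((1 / (2 * b)) * Real.exp (-|x| / b))

lemma laplace_lintegral_exp (g : ℝ → ℝ) (hg : Measurable g) :
    ∫⁻ x, ENNReal.ofReal (Real.exp (g x)) ∂(laplaceMeasure 1)
      = ∫⁻ x, ENNReal.ofReal ((1/2) * Real.exp (-|x|) * Real.exp (g x)) := by
  rw [laplaceMeasure, lintegral_withDensity_eq_lintegral_mul _ (by fun_prop) (by fun_prop)]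
  congr 1
  funext x
  simp only [Pi.mul_apply]
  rw [← ENNReal.ofReal_mul (by positivity)]
  norm_num

lemma laplace_mgf' (c d : ℝ) (hc : c < 1) (hd : -1 < d) :
    ∫⁻ x, ENNReal.ofReal (Real.exp (if 0 < x then c * x else d * x)) ∂(laplaceMeasure 1)
      = ENNReal.ofReal (1/(2*(1-c))) + ENNReal.ofReal (1/(2*(1+d))) := by
  rw [laplace_lintegral_exp _ (Measurable.ite (measurableSet_Ioi (a := (0:ℝ)))
    (by fun_prop) (by fun_prop)), laplace_mgf c d hc hd]

instance laplace_prob : IsProbabilityMeasure (laplaceMeasure 1) := by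
  constructor
  have := laplace_mgf' 0 0 (by norm_num) (by norm_num)
  simp only [zero_mul, ite_self, Real.exp_zero, ENNReal.ofReal_one, lintegral_one] at this
  norm_num at this
  rw [← ENNReal.ofReal_add (by norm_num) (by norm_num)] at this
  norm_num at this
  exact this

lemma chernoff_tail (k : ℕ) (g : ℝ → ℝ) (hg : Measurable g) (M t : ℝ)
    (hM : ∫⁻ x, ENNReal.ofReal (Real.exp (g x)) ∂(laplaceMeasure 1) = ENNReal.ofReal M) :
    (Measure.pi fun _ : Fin k => laplaceMeasure 1) {ω : Fin k → ℝ | t ≤ ∑ j, g (ω j)}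
      ≤ ENNReal.ofReal (Real.exp (-t)) * ENNReal.ofReal M ^ k := by
  set μ := Measure.pi fun _ : Fin k => laplaceMeasure 1 with hμ
  set f : (Fin k → ℝ) → ℝ≥0∞ := fun ω => ENNReal.ofReal (Real.exp (∑ j, g (ω j))) with hf
  have hfm : Measurable f := by
    apply ENNReal.measurable_ofReal.comp
    exact Real.measurable_exp.comp (Finset.measurable_sum _
      (fun j _ => hg.comp (measurable_pi_apply j)))
  have hint : ∫⁻ ω, f ω ∂μ = ENNReal.ofReal M ^ k := by
    have : ∀ ω : Fin k → ℝ, f ω = ∏ j, (fun x => ENNReal.ofReal (Real.exp (g x))) (ω j) := by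
      intro ω
      rw [hf]
      simp only [Real.exp_sum]
      exact ENNReal.ofReal_prod_of_nonneg (fun i _ => (Real.exp_pos _).le)
    simp_rw [this]
    rw [hμ]
    exact (mylintegral_pi_prod (laplaceMeasure 1) (fun x => ENNReal.ofReal (Real.exp (g x)))
      (by fun_prop) k).trans (by rw [hM])
  have hsub : {ω : Fin k → ℝ | t ≤ ∑ j, g (ω j)}
      ⊆ {ω : Fin k → ℝ | ENNReal.ofReal (Real.exp t) ≤ f ω} := by
    intro ω hω
    exact ENNReal.ofReal_le_ofReal (Real.exp_le_exp.2 hω)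
  have hmarkov := mul_meas_ge_le_lintegral₀ (μ := μ) hfm.aemeasurable (ENNReal.ofReal (Real.exp t))
  have h1 : μ {ω : Fin k → ℝ | t ≤ ∑ j, g (ω j)}
      ≤ μ {ω : Fin k → ℝ | ENNReal.ofReal (Real.exp t) ≤ f ω} := measure_mono hsub
  have het : ENNReal.ofReal (Real.exp t) ≠ 0 := by
    simp [ENNReal.ofReal_eq_zero, not_le, Real.exp_pos]
  have het' : ENNReal.ofReal (Real.exp t) ≠ ∞ := ENNReal.ofReal_ne_top
  rw [hint] at hmarkov
  have h2 : μ {ω : Fin k → ℝ | ENNReal.ofReal (Real.exp t) ≤ f ω}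
      ≤ ENNReal.ofReal M ^ k / ENNReal.ofReal (Real.exp t) := by
    rw [ENNReal.le_div_iff_mul_le (Or.inl het) (Or.inl het')]
    rw [mul_comm]
    exact hmarkov
  refine (h1.trans h2).trans (le_of_eq ?_)
  rw [ENNReal.div_eq_inv_mul, Real.exp_neg, ENNReal.ofReal_inv_of_pos (Real.exp_pos t)]

lemma mgf_lin (c : ℝ) (hc : |c| < 1) :
    ∫⁻ x, ENNReal.ofReal (Real.exp (c * x)) ∂(laplaceMeasure 1)
      = ENNReal.ofReal (1/(1-c^2)) := by
  have h1 : c < 1 := lt_of_abs_lt hc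
  have h2 : -1 < c := neg_lt_of_abs_lt hc
  have := laplace_mgf' c c h1 h2
  simp only [ite_self] at this
  have hp1 : (0:ℝ) < 1 - c := by linarith
  have hp2 : (0:ℝ) < 1 + c := by linarith
  rw [this, ← ENNReal.ofReal_add (by positivity) (by positivity)]
  congr 1
  have hne : 1 - c^2 ≠ 0 := by nlinarith
  field_simp
  ring

lemma mgf_abs (c : ℝ) (hc0 : 0 ≤ c) (hc : c < 1) :
    ∫⁻ x, ENNReal.ofReal (Real.exp (c * |x|)) ∂(laplaceMeasure 1)
      = ENNReal.ofReal (1/(1-c)) := by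
  have key : ∀ x : ℝ, c * |x| = if 0 < x then c * x else (-c) * x := by
    intro x
    by_cases hx : 0 < x
    · rw [if_pos hx, abs_of_pos hx]
    · rw [if_neg hx, abs_of_nonpos (not_lt.1 hx)]; ring
  simp_rw [key]
  rw [laplace_mgf' c (-c) hc (by linarith)]
  have hp1 : (0:ℝ) < 1 - c := by linarith
  have hp2 : (0:ℝ) < 1 + -c := by linarith
  rw [← ENNReal.ofReal_add (by positivity) (by positivity)]
  congr 1
  field_simp
  ring

lemma exp_half_lt_two : Real.exp (1/2) < 2 := by
  have h1 : Real.exp (1/2) * Real.exp (1/2) = Real.exp 1 := by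
    rw [← Real.exp_add]; norm_num
  have h2 := Real.exp_one_lt_d9
  nlinarith [Real.exp_pos (1/2)]

lemma half_lt_log_two : (1/2 : ℝ) < Real.log 2 := by
  rw [Real.lt_log_iff_exp_lt (by norm_num)]
  exact exp_half_lt_two

lemma aux_inv (x : ℝ) (h0 : 0 ≤ x) (h1 : x ≤ 1/2) : 1/(1-x) ≤ Real.exp (2*x) := by
  have h2 : (0:ℝ) < 1 - x := by linarith
  have h3 := Real.add_one_le_exp (2*x)
  rw [div_le_iff₀ h2]
  nlinarith

lemma log_frac_le : Real.log (25/16) ≤ 9/20 := by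
  rw [Real.log_le_iff_le_exp (by norm_num)]
  have := Real.sum_le_exp_of_nonneg (x := 9/20) (by norm_num) 4
  simp only [Finset.sum_range_succ, Finset.sum_range_zero] at this
  norm_num [Nat.factorial] at this
  linarith

lemma caseC' (L : ℝ) (hL : 1/2 < L) :
    Real.exp (-((1-1/(2*L)) * (2*L))) * (2*L) ≤ 2*Real.exp (-L) := by
  have hL0 : 0 < L := by linarith
  have h1 : (1-1/(2*L)) * (2*L) = 2*L - 1 := by field_simp
  rw [h1]
  have he := Real.add_one_le_exp (L-1)
  have h2 : Real.exp (-(2*L-1)) * Real.exp (L-1) = Real.exp (-L) := by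
    rw [← Real.exp_add]; ring_nf
  nlinarith [Real.exp_pos (-(2*L-1))]

lemma caseA' (k : ℕ) (L : ℝ) (hk2 : 2 ≤ (k:ℝ)) (hLpos : 0 < L) (hLk : L ≤ Real.sqrt k) :
    Real.exp (-(L/(2*Real.sqrt k) * (2*Real.sqrt k*L))) * (1/(1-(L/(2*Real.sqrt k))^2))^k
      ≤ (k:ℝ) * Real.exp (-L) := by
  have hkpos : (0:ℝ) < k := by linarith
  have hsk : 0 < Real.sqrt k := Real.sqrt_pos.2 hkpos
  have hsk2 : (Real.sqrt k)^2 = (k:ℝ) := Real.sq_sqrt hkpos.le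
  set c := L/(2*Real.sqrt k) with hc
  have hc0 : 0 < c := by positivity
  have hchalf : c ≤ 1/2 := by
    rw [hc, div_le_iff₀ (by positivity)]
    nlinarith
  have hc2 : c^2 = L^2/(4*(k:ℝ)) := by
    rw [hc, div_pow]
    congr 1
    nlinarith
  have hx : c^2 ≤ 1/2 := by nlinarith
  have hc2pos : 0 < 1 - c^2 := by nlinarith
  have h1 : (1/(1-c^2))^k ≤ Real.exp (2*c^2)^k :=
    pow_le_pow_left₀ (by positivity) (aux_inv _ (sq_nonneg c) hx) k
  have h2 : Real.exp (2*c^2)^k = Real.exp ((k:ℝ)*(2*c^2)) := (Real.exp_nat_mul _ k).symm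
  have h3 : c * (2*Real.sqrt k*L) = L^2 := by
    rw [hc]; field_simp
  have h4 : (k:ℝ)*(2*c^2) = L^2/2 := by
    rw [hc2]; field_simp; ring
  have h5 : Real.exp (-(c * (2*Real.sqrt k*L))) * (1/(1-c^2))^k
      ≤ Real.exp (-(L^2)) * Real.exp (L^2/2) := by
    rw [h3]
    have := h1.trans (le_of_eq (h2.trans (by rw [h4])))
    exact mul_le_mul_of_nonneg_left this (Real.exp_pos _).le
  refine h5.trans ?_
  rw [← Real.exp_add]
  have h6 : Real.exp (-(L^2) + L^2/2) = Real.exp (L - L^2/2) * Real.exp (-L) := by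
    rw [← Real.exp_add]; ring_nf
  rw [h6]
  have h7 : Real.exp (L - L^2/2) ≤ Real.exp (1/2) := Real.exp_le_exp.2 (by nlinarith [sq_nonneg (L-1)])
  nlinarith [Real.exp_pos (-L), exp_half_lt_two, Real.exp_pos (L - L^2/2)]

lemma caseB' (k : ℕ) (L : ℝ) (hk2 : 2 ≤ (k:ℝ)) (hLk : Real.sqrt k ≤ L) :
    Real.exp (-(3/5 * (2*Real.sqrt k*L))) * (1/(1-(3/5:ℝ)^2))^k ≤ (k:ℝ) * Real.exp (-L) := by
  have hkpos : (0:ℝ) < k := by linarith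
  have hsk : 0 < Real.sqrt k := Real.sqrt_pos.2 hkpos
  have hsk2 : (Real.sqrt k)^2 = (k:ℝ) := Real.sq_sqrt hkpos.le
  have hsk43 : 4/3 ≤ Real.sqrt k := by
    rw [Real.le_sqrt (by norm_num) hkpos.le]
    nlinarith
  have h0 : (1/(1-(3/5:ℝ)^2)) = 25/16 := by norm_num
  rw [h0]
  have h1 : ((25:ℝ)/16)^k = Real.exp ((k:ℝ) * Real.log (25/16)) := by
    rw [Real.exp_nat_mul, Real.exp_log (by norm_num)]
  rw [h1, ← Real.exp_add]
  have h2 : Real.exp (-(3/5 * (2*Real.sqrt k*L)) + (k:ℝ) * Real.log (25/16)) ≤ Real.exp (-L) := by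
    rw [Real.exp_le_exp]
    have hlog := log_frac_le
    have hL0 : 0 < L := lt_of_lt_of_le hsk hLk
    nlinarith [mul_le_mul_of_nonneg_left hlog hkpos.le,
      mul_le_mul_of_nonneg_left hLk (by nlinarith : (0:ℝ) ≤ 6/5 * Real.sqrt k - 1)]
  refine h2.trans ?_
  nlinarith [Real.exp_pos (-L)]
/-- If `X₁, …, X_k` are independent Laplace(0,1) random variables (modeled on the canonical
product space) and `β ∈ (0,1)`, then with probability at least `1 − β`,
`|Σ_{j=1}^k X_j| ≤ 2√k · ln(2k/β)`. -/
theorem stmt6 (k : ℕ) (hk : 1 ≤ k) (β : ℝ) (hβ : 0 < β) (hβ1 : β < 1) :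
    (Measure.pi fun _ : Fin k => laplaceMeasure 1)
        {ω : Fin k → ℝ | |∑ j, ω j| ≤ 2 * Real.sqrt k * Real.log (2 * k / β)} ≥
      ENNReal.ofReal (1 - β) := by
  set μ := Measure.pi fun _ : Fin k => laplaceMeasure 1 with hμdef
  set L := Real.log (2 * k / β) with hLdef
  set T := 2 * Real.sqrt k * L with hTdef
  have hkR : (1:ℝ) ≤ (k:ℝ) := by exact_mod_cast hk
  have hkpos : (0:ℝ) < k := by linarith
  have hfrac : (0:ℝ) < 2 * k / β := by positivity
  have hfrac2 : (2:ℝ) ≤ 2 * k / β := by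
    rw [le_div_iff₀ hβ]; nlinarith
  have hLge : Real.log 2 ≤ L := by
    rw [hLdef]; exact Real.log_le_log (by norm_num) hfrac2
  have hLhalf : 1/2 < L := lt_of_lt_of_le half_lt_log_two hLge
  have hLpos : 0 < L := by linarith
  have hexpL : Real.exp (-L) = β / (2 * k) := by
    rw [hLdef, Real.exp_neg, Real.exp_log hfrac, inv_div]
  have hAm : MeasurableSet {ω : Fin k → ℝ | |∑ j, ω j| ≤ T} := by
    have hm : Measurable (fun ω : Fin k → ℝ => |∑ j, ω j|) :=
      (Finset.measurable_sum Finset.univ (fun j _ => measurable_pi_apply j)).abs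
    exact measurableSet_le hm measurable_const
  haveI : IsProbabilityMeasure μ := by rw [hμdef]; infer_instance
  have hcompl : μ {ω : Fin k → ℝ | |∑ j, ω j| ≤ T}ᶜ ≤ ENNReal.ofReal β := by
    rcases Nat.lt_or_ge k 2 with hk1 | hk2
    · -- k = 1
      have hk1' : k = 1 := by omega
      subst hk1'
      set c := 1 - 1/(2*L) with hcdef
      have hfl : 1/(2*L) < 1 := by rw [div_lt_one (by linarith)]; linarith
      have hc0 : 0 < c := by rw [hcdef]; linarith
      have hc1 : c < 1 := by
        have : 0 < 1/(2*L) := by positivity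
        rw [hcdef]; linarith
      have hsub : {ω : Fin 1 → ℝ | |∑ j, ω j| ≤ T}ᶜ
          ⊆ {ω : Fin 1 → ℝ | c * T ≤ ∑ j, (fun x => c * |x|) (ω j)} := by
        intro ω hω
        simp only [mem_compl_iff, mem_setOf_eq, not_le] at hω
        simp only [mem_setOf_eq]
        have habs : |∑ j, ω j| ≤ ∑ j, |ω j| := Finset.abs_sum_le_sum_abs _ _
        have hT : T ≤ ∑ j, |ω j| := le_trans (le_of_lt hω) habs
        calc c * T ≤ c * ∑ j, |ω j| := mul_le_mul_of_nonneg_left hT hc0.le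
          _ = ∑ j, c * |ω j| := Finset.mul_sum _ _ _
      refine (measure_mono hsub).trans ?_
      refine (chernoff_tail 1 (fun x => c * |x|) (by fun_prop) (1/(1-c)) (c*T)
        (mgf_abs c hc0.le hc1)).trans ?_
      rw [pow_one, ← ENNReal.ofReal_mul (Real.exp_pos _).le]
      apply ENNReal.ofReal_le_ofReal
      have h1mc : (1:ℝ)/(1-c) = 2*L := by
        rw [hcdef]
        have : (1:ℝ) - (1 - 1/(2*L)) = 1/(2*L) := by ring
        rw [this, one_div_one_div]
      have hT1 : T = 2*L := by
        rw [hTdef]; norm_num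
      rw [h1mc, hT1]
      have hkey : Real.exp (-(c*(2*L))) * (2*L) ≤ 2*Real.exp (-L) := by
        have := caseC' L hLhalf
        rw [hcdef]
        exact this
      refine hkey.trans ?_
      rw [hexpL]
      push_cast
      linarith
    · -- k ≥ 2
      have hk2R : (2:ℝ) ≤ (k:ℝ) := by exact_mod_cast hk2
      have hskpos : 0 < Real.sqrt k := Real.sqrt_pos.2 hkpos
      obtain ⟨c, hc0, hcabs, hbound⟩ : ∃ c : ℝ, 0 < c ∧ |c| < 1 ∧
          Real.exp (-(c*T)) * (1/(1-c^2))^k ≤ (k:ℝ) * Real.exp (-L) := by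
        rcases le_total L (Real.sqrt k) with h | h
        · refine ⟨L/(2*Real.sqrt k), by positivity, ?_, by
            simpa [hTdef] using caseA' k L hk2R hLpos h⟩
          rw [abs_of_pos (by positivity), div_lt_one (by positivity)]
          nlinarith
        · exact ⟨3/5, by norm_num, by rw [abs_of_pos] <;> norm_num,
            by simpa [hTdef] using caseB' k L hk2R h⟩
      have hc2pos : (0:ℝ) < 1 - c^2 := by
        have := abs_lt.1 hcabs
        nlinarith
      have hsub : {ω : Fin k → ℝ | |∑ j, ω j| ≤ T}ᶜ
          ⊆ {ω : Fin k → ℝ | c * T ≤ ∑ j, (fun x => c * x) (ω j)}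
            ∪ {ω : Fin k → ℝ | c * T ≤ ∑ j, (fun x => -c * x) (ω j)} := by
        intro ω hω
        simp only [mem_compl_iff, mem_setOf_eq, not_le] at hω
        rcases lt_abs.1 hω with h | h
        · left
          simp only [mem_setOf_eq, ← Finset.mul_sum]
          exact mul_le_mul_of_nonneg_left h.le hc0.le
        · right
          simp only [mem_setOf_eq, ← Finset.mul_sum]
          have : T ≤ -(∑ j, ω j) := by linarith
          calc c * T ≤ c * (-(∑ j, ω j)) := mul_le_mul_of_nonneg_left this hc0.le
            _ = -c * ∑ j, ω j := by ring
      refine (measure_mono hsub).trans ((measure_union_le _ _).trans ?_)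
      have htail1 := chernoff_tail k (fun x => c * x) (by fun_prop) (1/(1-c^2)) (c*T)
        (mgf_lin c hcabs)
      have htail2 := chernoff_tail k (fun x => -c * x) (by fun_prop) (1/(1-c^2)) (c*T)
        (by rw [mgf_lin (-c) (by rwa [abs_neg])]; rw [neg_sq])
      have hhalf : ∀ s : Set (Fin k → ℝ), μ s ≤ ENNReal.ofReal (Real.exp (-(c*T)))
          * ENNReal.ofReal (1/(1-c^2)) ^ k → μ s ≤ ENNReal.ofReal (β/2) := by
        intro s hs
        refine hs.trans ?_
        rw [← ENNReal.ofReal_pow (by positivity), ← ENNReal.ofReal_mul (Real.exp_pos _).le]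
        apply ENNReal.ofReal_le_ofReal
        refine hbound.trans ?_
        have hval : (k:ℝ) * (β/(2*(k:ℝ))) = β/2 := by
          field_simp
        rw [hexpL, hval]
      have h1 := hhalf _ htail1
      have h2 := hhalf _ htail2
      calc μ {ω : Fin k → ℝ | c * T ≤ ∑ j, (fun x => c * x) (ω j)}
            + μ {ω : Fin k → ℝ | c * T ≤ ∑ j, (fun x => -c * x) (ω j)}
          ≤ ENNReal.ofReal (β/2) + ENNReal.ofReal (β/2) := add_le_add h1 h2
        _ = ENNReal.ofReal β := by
            rw [← ENNReal.ofReal_add (by positivity) (by positivity)]; norm_num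
  have h1 : (1:ℝ≥0∞) ≤ μ {ω : Fin k → ℝ | |∑ j, ω j| ≤ T}
      + μ {ω : Fin k → ℝ | |∑ j, ω j| ≤ T}ᶜ := by
    rw [measure_add_measure_compl hAm, measure_univ]
  calc ENNReal.ofReal (1-β) = ENNReal.ofReal 1 - ENNReal.ofReal β :=
        ENNReal.ofReal_sub 1 hβ.le
    _ = 1 - ENNReal.ofReal β := by rw [ENNReal.ofReal_one]
    _ ≤ 1 - μ {ω : Fin k → ℝ | |∑ j, ω j| ≤ T}ᶜ := tsub_le_tsub_left hcompl 1
    _ ≤ μ {ω : Fin k → ℝ | |∑ j, ω j| ≤ T} := tsub_le_iff_right.2 h1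
end

section
/- Let μ, μ′, ν, ν′ be probability distributions on ℝ^d whose supports are contained in the centered closed ball of radius R. Then |W₂²(μ, ν) − W₂²(μ′, ν′)| ≤ 4R·W₁(μ, μ′) + 4R·W₁(ν, ν′). -/
open MeasureTheory

/-- The 1-Wasserstein distance between two measures on `ℝ^d`, as the infimum over couplings of
`∫ ‖x − y‖ dπ`. -/
noncomputable def W1E (d : ℕ) (μ ν : Measure (EuclideanSpace ℝ (Fin d))) : ℝ :=
  sInf {c | ∃ π : Measure (EuclideanSpace ℝ (Fin d) × EuclideanSpace ℝ (Fin d)),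
    IsProbabilityMeasure π ∧
    π.map Prod.fst = μ ∧ π.map Prod.snd = ν ∧ c = ∫ z, ‖z.1 - z.2‖ ∂π}

/-- The squared 2-Wasserstein distance between two measures on `ℝ^d`, as the infimum over
couplings of `∫ ‖x − y‖² dπ`. -/
noncomputable def W2sqE (d : ℕ) (μ ν : Measure (EuclideanSpace ℝ (Fin d))) : ℝ :=
  sInf {c | ∃ π : Measure (EuclideanSpace ℝ (Fin d) × EuclideanSpace ℝ (Fin d)),
    IsProbabilityMeasure π ∧
    π.map Prod.fst = μ ∧ π.map Prod.snd = ν ∧ c = ∫ z, ‖z.1 - z.2‖ ^ 2 ∂π}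


open ProbabilityTheory
set_option linter.unusedSectionVars false


section glue
variable {d : ℕ}
variable (π π₁ π₂ : Measure ((EuclideanSpace ℝ (Fin d)) × (EuclideanSpace ℝ (Fin d))))
  [IsProbabilityMeasure π] [IsProbabilityMeasure π₁] [IsProbabilityMeasure π₂]

noncomputable def glueK : Kernel ((EuclideanSpace ℝ (Fin d)) × (EuclideanSpace ℝ (Fin d)))
    ((EuclideanSpace ℝ (Fin d)) × (EuclideanSpace ℝ (Fin d))) :=
  (((π₁.map Prod.swap).condKernel).comap Prod.fst measurable_fst) ×ₖ
    (((π₂.map Prod.swap).condKernel).comap Prod.snd measurable_snd)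

instance : IsMarkovKernel (glueK π₁ π₂) := by
  unfold glueK; infer_instance

noncomputable def glueM : Measure (((EuclideanSpace ℝ (Fin d)) × (EuclideanSpace ℝ (Fin d))) ×
    ((EuclideanSpace ℝ (Fin d)) × (EuclideanSpace ℝ (Fin d)))) :=
  π ⊗ₘ (glueK π₁ π₂)

instance : IsProbabilityMeasure (glueM π π₁ π₂) := by
  unfold glueM; infer_instance

lemma glueM_map_one (h : π.map Prod.fst = (π₁.map Prod.swap).fst) :
    (glueM π π₁ π₂).map (fun z => (z.1.1, z.2.1)) = π₁.map Prod.swap := by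
  set ρ := π₁.map Prod.swap with hρ
  have : IsProbabilityMeasure ρ :=
    Measure.isProbabilityMeasure_map measurable_swap.aemeasurable
  ext s hs
  rw [Measure.map_apply (by fun_prop) hs, glueM,
    Measure.compProd_apply (hs.preimage (by fun_prop))]
  have hk : ∀ p : (EuclideanSpace ℝ (Fin d)) × (EuclideanSpace ℝ (Fin d)),
      (glueK π₁ π₂) p (Prod.mk p ⁻¹' ((fun z => (z.1.1, z.2.1)) ⁻¹' s))
      = ρ.condKernel p.1 (Prod.mk p.1 ⁻¹' s) := by
    intro p
    rw [glueK, Kernel.prod_apply, Kernel.comap_apply, Kernel.comap_apply]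
    have : (Prod.mk p ⁻¹' ((fun z : (EuclideanSpace ℝ (Fin d) × EuclideanSpace ℝ (Fin d)) × (EuclideanSpace ℝ (Fin d) × EuclideanSpace ℝ (Fin d)) => (z.1.1, z.2.1)) ⁻¹' s))
        = (Prod.mk p.1 ⁻¹' s) ×ˢ (Set.univ : Set (EuclideanSpace ℝ (Fin d))) := by
      ext w; simp [Set.mem_prod]
    rw [this, Measure.prod_prod, measure_univ, mul_one]
  simp_rw [hk]
  have hmeas : Measurable fun x => ρ.condKernel x (Prod.mk x ⁻¹' s) :=
    Kernel.measurable_kernel_prodMk_left hs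
  calc ∫⁻ p, ρ.condKernel p.1 (Prod.mk p.1 ⁻¹' s) ∂π
      = ∫⁻ x, ρ.condKernel x (Prod.mk x ⁻¹' s) ∂(π.map Prod.fst) :=
        (lintegral_map hmeas measurable_fst).symm
    _ = ∫⁻ x, ρ.condKernel x (Prod.mk x ⁻¹' s) ∂ρ.fst := by rw [h]
    _ = (ρ.fst ⊗ₘ ρ.condKernel) s := (Measure.compProd_apply hs).symm
    _ = ρ s := by rw [ρ.disintegrate ρ.condKernel]

lemma glueM_map_two (h : π.map Prod.snd = (π₂.map Prod.swap).fst) :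
    (glueM π π₁ π₂).map (fun z => (z.1.2, z.2.2)) = π₂.map Prod.swap := by
  set ρ := π₂.map Prod.swap with hρ
  have : IsProbabilityMeasure ρ :=
    Measure.isProbabilityMeasure_map measurable_swap.aemeasurable
  ext s hs
  rw [Measure.map_apply (by fun_prop) hs, glueM,
    Measure.compProd_apply (hs.preimage (by fun_prop))]
  have hk : ∀ p : (EuclideanSpace ℝ (Fin d)) × (EuclideanSpace ℝ (Fin d)),
      (glueK π₁ π₂) p (Prod.mk p ⁻¹' ((fun z => (z.1.2, z.2.2)) ⁻¹' s))
      = ρ.condKernel p.2 (Prod.mk p.2 ⁻¹' s) := by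
    intro p
    rw [glueK, Kernel.prod_apply, Kernel.comap_apply, Kernel.comap_apply]
    have : (Prod.mk p ⁻¹' ((fun z : (EuclideanSpace ℝ (Fin d) × EuclideanSpace ℝ (Fin d)) × (EuclideanSpace ℝ (Fin d) × EuclideanSpace ℝ (Fin d)) => (z.1.2, z.2.2)) ⁻¹' s))
        = (Set.univ : Set (EuclideanSpace ℝ (Fin d))) ×ˢ (Prod.mk p.2 ⁻¹' s) := by
      ext w; simp [Set.mem_prod]
    rw [this, Measure.prod_prod, measure_univ, one_mul]
  simp_rw [hk]
  have hmeas : Measurable fun x => ρ.condKernel x (Prod.mk x ⁻¹' s) :=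
    Kernel.measurable_kernel_prodMk_left hs
  calc ∫⁻ p, ρ.condKernel p.2 (Prod.mk p.2 ⁻¹' s) ∂π
      = ∫⁻ x, ρ.condKernel x (Prod.mk x ⁻¹' s) ∂(π.map Prod.snd) :=
        (lintegral_map hmeas measurable_snd).symm
    _ = ∫⁻ x, ρ.condKernel x (Prod.mk x ⁻¹' s) ∂ρ.fst := by rw [h]
    _ = (ρ.fst ⊗ₘ ρ.condKernel) s := (Measure.compProd_apply hs).symm
    _ = ρ s := by rw [ρ.disintegrate ρ.condKernel]

lemma glueM_map_fst : (glueM π π₁ π₂).map Prod.fst = π := by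
  rw [glueM]; exact Measure.fst_compProd π _
end glue

section helpers
variable {d : ℕ}

lemma ptwise {R : ℝ} (hR : 0 < R) {x x' y y' : EuclideanSpace ℝ (Fin d)}
    (hx : ‖x‖ ≤ R) (hx' : ‖x'‖ ≤ R) (hy : ‖y‖ ≤ R) (hy' : ‖y'‖ ≤ R) :
    ‖x - y‖ ^ 2 ≤ ‖x' - y'‖ ^ 2 + 4 * R * ‖x - x'‖ + 4 * R * ‖y - y'‖ := by
  have ha : ‖x - y‖ ≤ 2 * R := (norm_sub_le _ _).trans (by linarith)
  have hb : ‖x' - y'‖ ≤ 2 * R := (norm_sub_le _ _).trans (by linarith)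
  have htri : ‖x - y‖ ≤ ‖x - x'‖ + ‖x' - y'‖ + ‖y' - y‖ := by
    calc ‖x - y‖ = ‖(x - x') + (x' - y') + (y' - y)‖ := by
          rw [show x - x' + (x' - y') + (y' - y) = x - y by abel]
      _ ≤ _ := by
        refine (norm_add_le _ _).trans ?_
        gcongr
        exact norm_add_le _ _
  have h1 : ‖y' - y‖ = ‖y - y'‖ := norm_sub_rev _ _
  have n1 : (0:ℝ) ≤ ‖x - y‖ := norm_nonneg _
  have n2 : (0:ℝ) ≤ ‖x' - y'‖ := norm_nonneg _
  have n3 : (0:ℝ) ≤ ‖x - x'‖ := norm_nonneg _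
  have n4 : (0:ℝ) ≤ ‖y - y'‖ := norm_nonneg _
  nlinarith [sq_nonneg (‖x - y‖ - ‖x' - y'‖), sq_nonneg (‖x-y‖ + ‖x'-y'‖)]

lemma ae_ball {Ω : Type*} [MeasurableSpace Ω] {R : ℝ} {θ : Measure Ω}
    {c : Ω → EuclideanSpace ℝ (Fin d)} (hc : Measurable c)
    {m : Measure (EuclideanSpace ℝ (Fin d))} (h : θ.map c = m)
    (hm : m (Metric.closedBall 0 R)ᶜ = 0) : ∀ᵐ z ∂θ, ‖c z‖ ≤ R := by
  rw [ae_iff]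
  have : {z | ¬ ‖c z‖ ≤ R} = c ⁻¹' (Metric.closedBall 0 R)ᶜ := by
    ext z; simp [mem_closedBall_zero_iff]
  rw [this, ← Measure.map_apply hc measurableSet_closedBall.compl, h]
  exact hm

lemma couple_nonneg_mem {μ ν : Measure (EuclideanSpace ℝ (Fin d))} {c : ℝ}
    (hc : c ∈ {c | ∃ π : Measure (EuclideanSpace ℝ (Fin d) × EuclideanSpace ℝ (Fin d)),
      IsProbabilityMeasure π ∧
      π.map Prod.fst = μ ∧ π.map Prod.snd = ν ∧ c = ∫ z, ‖z.1 - z.2‖ ∂π}) : 0 ≤ c := by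
  obtain ⟨π, _, _, _, rfl⟩ := hc
  exact integral_nonneg fun z => norm_nonneg _

lemma couple_sq_nonneg_mem {μ ν : Measure (EuclideanSpace ℝ (Fin d))} {c : ℝ}
    (hc : c ∈ {c | ∃ π : Measure (EuclideanSpace ℝ (Fin d) × EuclideanSpace ℝ (Fin d)),
      IsProbabilityMeasure π ∧
      π.map Prod.fst = μ ∧ π.map Prod.snd = ν ∧ c = ∫ z, ‖z.1 - z.2‖ ^ 2 ∂π}) : 0 ≤ c := by
  obtain ⟨π, _, _, _, rfl⟩ := hc
  exact integral_nonneg fun z => sq_nonneg _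

lemma couple_nonempty_w1 (μ ν : Measure (EuclideanSpace ℝ (Fin d)))
    [IsProbabilityMeasure μ] [IsProbabilityMeasure ν] :
    Set.Nonempty {c | ∃ π : Measure (EuclideanSpace ℝ (Fin d) × EuclideanSpace ℝ (Fin d)),
      IsProbabilityMeasure π ∧
      π.map Prod.fst = μ ∧ π.map Prod.snd = ν ∧ c = ∫ z, ‖z.1 - z.2‖ ∂π} :=
  ⟨_, μ.prod ν, inferInstance, Measure.fst_prod, Measure.snd_prod, rfl⟩

lemma couple_nonempty_w2 (μ ν : Measure (EuclideanSpace ℝ (Fin d)))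
    [IsProbabilityMeasure μ] [IsProbabilityMeasure ν] :
    Set.Nonempty {c | ∃ π : Measure (EuclideanSpace ℝ (Fin d) × EuclideanSpace ℝ (Fin d)),
      IsProbabilityMeasure π ∧
      π.map Prod.fst = μ ∧ π.map Prod.snd = ν ∧ c = ∫ z, ‖z.1 - z.2‖ ^ 2 ∂π} :=
  ⟨_, μ.prod ν, inferInstance, Measure.fst_prod, Measure.snd_prod, rfl⟩

end helpers


section helpers

variable {d : ℕ}

private lemma w1_subset (μ ν : Measure (EuclideanSpace ℝ (Fin d))) :
    {c | ∃ π : Measure (EuclideanSpace ℝ (Fin d) × EuclideanSpace ℝ (Fin d)),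
      IsProbabilityMeasure π ∧
      π.map Prod.fst = μ ∧ π.map Prod.snd = ν ∧ c = ∫ z, ‖z.1 - z.2‖ ∂π} ⊆
    {c | ∃ π : Measure (EuclideanSpace ℝ (Fin d) × EuclideanSpace ℝ (Fin d)),
      IsProbabilityMeasure π ∧
      π.map Prod.fst = ν ∧ π.map Prod.snd = μ ∧ c = ∫ z, ‖z.1 - z.2‖ ∂π} := by
  rintro c ⟨π, hP, h1, h2, rfl⟩
  haveI := hP
  refine ⟨π.map Prod.swap, Measure.isProbabilityMeasure_map measurable_swap.aemeasurable, ?_, ?_, ?_⟩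
  · rw [Measure.map_map measurable_fst measurable_swap]; exact h2
  · rw [Measure.map_map measurable_snd measurable_swap]; exact h1
  · rw [integral_map measurable_swap.aemeasurable (f := fun z => ‖z.1 - z.2‖)
      ((continuous_fst.sub continuous_snd).norm.aestronglyMeasurable)]
    simp_rw [Prod.swap, norm_sub_rev]

lemma w1_symm (μ ν : Measure (EuclideanSpace ℝ (Fin d))) : W1E d μ ν = W1E d ν μ :=
  congrArg sInf (Set.Subset.antisymm (w1_subset μ ν) (w1_subset ν μ))

end helpers

section key

variable {d : ℕ}
local notation "E" => EuclideanSpace ℝ (Fin d)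
local notation "Z" => (EuclideanSpace ℝ (Fin d) × EuclideanSpace ℝ (Fin d)) ×
  (EuclideanSpace ℝ (Fin d) × EuclideanSpace ℝ (Fin d))

lemma key {R : ℝ} (hR : 0 < R)
    (μ μ' ν ν' : Measure (EuclideanSpace ℝ (Fin d)))
    [IsProbabilityMeasure μ] [IsProbabilityMeasure μ']
    [IsProbabilityMeasure ν] [IsProbabilityMeasure ν']
    (hμ : μ (Metric.closedBall 0 R)ᶜ = 0) (hμ' : μ' (Metric.closedBall 0 R)ᶜ = 0)
    (hν : ν (Metric.closedBall 0 R)ᶜ = 0) (hν' : ν' (Metric.closedBall 0 R)ᶜ = 0) :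
    W2sqE d μ ν ≤ W2sqE d μ' ν' + 4 * R * W1E d μ μ' + 4 * R * W1E d ν ν' := by
  refine le_of_forall_pos_le_add fun ε hε => ?_
  set δ := ε / (1 + 8 * R) with hδdef
  have hδ : 0 < δ := div_pos hε (by linarith)
  obtain ⟨c, hcmem, hclt⟩ := Real.lt_sInf_add_pos (couple_nonempty_w2 μ' ν') hδ
  obtain ⟨π, hπP, hπf, hπs, hceq⟩ := hcmem
  obtain ⟨c₁, hc₁mem, hc₁lt⟩ := Real.lt_sInf_add_pos (couple_nonempty_w1 μ μ') hδ
  obtain ⟨π₁, hπ₁P, hπ₁f, hπ₁s, hc₁eq⟩ := hc₁mem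
  obtain ⟨c₂, hc₂mem, hc₂lt⟩ := Real.lt_sInf_add_pos (couple_nonempty_w1 ν ν') hδ
  obtain ⟨π₂, hπ₂P, hπ₂f, hπ₂s, hc₂eq⟩ := hc₂mem
  haveI := hπP; haveI := hπ₁P; haveI := hπ₂P
  have hswap1 : (π₁.map Prod.swap).fst = μ' := by
    show (π₁.map Prod.swap).map Prod.fst = μ'
    rw [Measure.map_map measurable_fst measurable_swap]; exact hπ₁s
  have hswap1' : (π₁.map Prod.swap).map Prod.snd = μ := by
    rw [Measure.map_map measurable_snd measurable_swap]; exact hπ₁f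
  have hswap2 : (π₂.map Prod.swap).fst = ν' := by
    show (π₂.map Prod.swap).map Prod.fst = ν'
    rw [Measure.map_map measurable_fst measurable_swap]; exact hπ₂s
  have hswap2' : (π₂.map Prod.swap).map Prod.snd = ν := by
    rw [Measure.map_map measurable_snd measurable_swap]; exact hπ₂f
  set θ := glueM π π₁ π₂ with hθ
  have hmap1 := glueM_map_one π π₁ π₂ (by rw [hπf, hswap1])
  have hmap2 := glueM_map_two π π₁ π₂ (by rw [hπs, hswap2])
  have hmapfst := glueM_map_fst π π₁ π₂
  have hg₁ : Measurable (fun z : Z => (z.1.1, z.2.1)) := by fun_prop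
  have hg₂ : Measurable (fun z : Z => (z.1.2, z.2.2)) := by fun_prop
  have h11 : θ.map (fun z : Z => z.1.1) = μ' := by
    rw [show (fun z : Z => z.1.1) = (Prod.fst ∘ (Prod.fst : Z → E × E)) from rfl,
      ← Measure.map_map measurable_fst measurable_fst, hmapfst, hπf]
  have h12 : θ.map (fun z : Z => z.1.2) = ν' := by
    rw [show (fun z : Z => z.1.2) = (Prod.snd ∘ (Prod.fst : Z → E × E)) from rfl,
      ← Measure.map_map measurable_snd measurable_fst, hmapfst, hπs]
  have h21 : θ.map (fun z : Z => z.2.1) = μ := by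
    rw [show (fun z : Z => z.2.1) = (Prod.snd ∘ (fun z : Z => (z.1.1, z.2.1))) from rfl,
      ← Measure.map_map measurable_snd hg₁, hmap1, hswap1']
  have h22 : θ.map (fun z : Z => z.2.2) = ν := by
    rw [show (fun z : Z => z.2.2) = (Prod.snd ∘ (fun z : Z => (z.1.2, z.2.2))) from rfl,
      ← Measure.map_map measurable_snd hg₂, hmap2, hswap2']
  set θ₂ := θ.map (Prod.snd : Z → E × E) with hθ₂
  haveI hθ₂P : IsProbabilityMeasure θ₂ := Measure.isProbabilityMeasure_map measurable_snd.aemeasurable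
  have hθ₂f : θ₂.map Prod.fst = μ := by
    rw [hθ₂, Measure.map_map measurable_fst measurable_snd]; exact h21
  have hθ₂s : θ₂.map Prod.snd = ν := by
    rw [hθ₂, Measure.map_map measurable_snd measurable_snd]; exact h22
  haveI : BorelSpace ((EuclideanSpace ℝ (Fin d) × EuclideanSpace ℝ (Fin d)) ×
      (EuclideanSpace ℝ (Fin d) × EuclideanSpace ℝ (Fin d))) := Prod.borelSpace
  have hb11 : ∀ᵐ z : Z ∂θ, ‖z.1.1‖ ≤ R := ae_ball (by fun_prop) h11 hμ'
  have hb12 : ∀ᵐ z : Z ∂θ, ‖z.1.2‖ ≤ R := ae_ball (by fun_prop) h12 hν'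
  have hb21 : ∀ᵐ z : Z ∂θ, ‖z.2.1‖ ≤ R := ae_ball (by fun_prop) h21 hμ
  have hb22 : ∀ᵐ z : Z ∂θ, ‖z.2.2‖ ≤ R := ae_ball (by fun_prop) h22 hν
  -- continuity
  have hcsq : Continuous fun w : E × E => ‖w.1 - w.2‖ ^ 2 :=
    ((continuous_fst.sub continuous_snd).norm).pow 2
  have hcn : Continuous fun w : E × E => ‖w.2 - w.1‖ :=
    (continuous_snd.sub continuous_fst).norm
  have hcf : Continuous fun z : Z => ‖z.2.1 - z.2.2‖ ^ 2 := by fun_prop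
  have hcg : Continuous fun z : Z => ‖z.1.1 - z.1.2‖ ^ 2 := by fun_prop
  have hch₁ : Continuous fun z : Z => ‖z.2.1 - z.1.1‖ := by fun_prop
  have hch₂ : Continuous fun z : Z => ‖z.2.2 - z.1.2‖ := by fun_prop
  -- integrability
  have hint_f : Integrable (fun z : Z => ‖z.2.1 - z.2.2‖ ^ 2) θ := by
    refine Integrable.mono' (integrable_const ((2 * R) ^ 2)) hcf.aestronglyMeasurable ?_
    filter_upwards [hb21, hb22] with z h1 h2
    rw [Real.norm_eq_abs, abs_of_nonneg (sq_nonneg _)]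
    exact pow_le_pow_left₀ (norm_nonneg _) ((norm_sub_le _ _).trans (by linarith)) 2
  have hint_g : Integrable (fun z : Z => ‖z.1.1 - z.1.2‖ ^ 2) θ := by
    refine Integrable.mono' (integrable_const ((2 * R) ^ 2)) hcg.aestronglyMeasurable ?_
    filter_upwards [hb11, hb12] with z h1 h2
    rw [Real.norm_eq_abs, abs_of_nonneg (sq_nonneg _)]
    exact pow_le_pow_left₀ (norm_nonneg _) ((norm_sub_le _ _).trans (by linarith)) 2
  have hint_h₁ : Integrable (fun z : Z => ‖z.2.1 - z.1.1‖) θ := by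
    refine Integrable.mono' (integrable_const (2 * R)) hch₁.aestronglyMeasurable ?_
    filter_upwards [hb21, hb11] with z h1 h2
    rw [Real.norm_eq_abs, abs_of_nonneg (norm_nonneg _)]
    exact (norm_sub_le _ _).trans (by linarith)
  have hint_h₂ : Integrable (fun z : Z => ‖z.2.2 - z.1.2‖) θ := by
    refine Integrable.mono' (integrable_const (2 * R)) hch₂.aestronglyMeasurable ?_
    filter_upwards [hb22, hb12] with z h1 h2
    rw [Real.norm_eq_abs, abs_of_nonneg (norm_nonneg _)]
    exact (norm_sub_le _ _).trans (by linarith)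
  have hint_h₁' : Integrable (fun z : Z => 4 * R * ‖z.2.1 - z.1.1‖) θ := hint_h₁.const_mul _
  have hint_h₂' : Integrable (fun z : Z => 4 * R * ‖z.2.2 - z.1.2‖) θ := hint_h₂.const_mul _
  -- the chain
  have step1 : W2sqE d μ ν ≤ ∫ z, ‖z.1 - z.2‖ ^ 2 ∂θ₂ :=
    csInf_le ⟨0, fun c hc => couple_sq_nonneg_mem hc⟩ ⟨θ₂, hθ₂P, hθ₂f, hθ₂s, rfl⟩
  have step2 : ∫ z, ‖z.1 - z.2‖ ^ 2 ∂θ₂ = ∫ z : Z, ‖z.2.1 - z.2.2‖ ^ 2 ∂θ :=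
    integral_map measurable_snd.aemeasurable hcsq.aestronglyMeasurable
  have step3 : ∫ z : Z, ‖z.2.1 - z.2.2‖ ^ 2 ∂θ ≤
      ∫ z : Z, (‖z.1.1 - z.1.2‖ ^ 2 + 4 * R * ‖z.2.1 - z.1.1‖ + 4 * R * ‖z.2.2 - z.1.2‖) ∂θ := by
    refine integral_mono_ae hint_f ((hint_g.add hint_h₁').add hint_h₂') ?_
    filter_upwards [hb11, hb12, hb21, hb22] with z h1 h2 h3 h4
    exact ptwise hR h3 h1 h4 h2
  have step4 : ∫ z : Z, (‖z.1.1 - z.1.2‖ ^ 2 + 4 * R * ‖z.2.1 - z.1.1‖ +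
        4 * R * ‖z.2.2 - z.1.2‖) ∂θ
      = (∫ z : Z, ‖z.1.1 - z.1.2‖ ^ 2 ∂θ) + 4 * R * (∫ z : Z, ‖z.2.1 - z.1.1‖ ∂θ) +
        4 * R * (∫ z : Z, ‖z.2.2 - z.1.2‖ ∂θ) := by
    calc ∫ z : Z, (‖z.1.1 - z.1.2‖ ^ 2 + 4 * R * ‖z.2.1 - z.1.1‖ + 4 * R * ‖z.2.2 - z.1.2‖) ∂θ
        = (∫ z : Z, (‖z.1.1 - z.1.2‖ ^ 2 + 4 * R * ‖z.2.1 - z.1.1‖) ∂θ) +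
          ∫ z : Z, 4 * R * ‖z.2.2 - z.1.2‖ ∂θ := integral_add (hint_g.add hint_h₁') hint_h₂'
      _ = ((∫ z : Z, ‖z.1.1 - z.1.2‖ ^ 2 ∂θ) + ∫ z : Z, 4 * R * ‖z.2.1 - z.1.1‖ ∂θ) +
          ∫ z : Z, 4 * R * ‖z.2.2 - z.1.2‖ ∂θ := by rw [integral_add hint_g hint_h₁']
      _ = _ := by rw [integral_const_mul, integral_const_mul]
  have hA : ∫ z : Z, ‖z.1.1 - z.1.2‖ ^ 2 ∂θ = c := by
    calc ∫ z : Z, ‖z.1.1 - z.1.2‖ ^ 2 ∂θ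
        = ∫ w, ‖w.1 - w.2‖ ^ 2 ∂(θ.map (Prod.fst : Z → E × E)) :=
          (integral_map measurable_fst.aemeasurable hcsq.aestronglyMeasurable).symm
      _ = c := by rw [hmapfst, ← hceq]
  have hB : ∫ z : Z, ‖z.2.1 - z.1.1‖ ∂θ = c₁ := by
    calc ∫ z : Z, ‖z.2.1 - z.1.1‖ ∂θ
        = ∫ w, ‖w.2 - w.1‖ ∂(θ.map (fun z : Z => (z.1.1, z.2.1))) :=
          (integral_map hg₁.aemeasurable hcn.aestronglyMeasurable).symm
      _ = ∫ w, ‖w.2 - w.1‖ ∂(π₁.map Prod.swap) := by rw [hmap1]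
      _ = ∫ z, ‖z.1 - z.2‖ ∂π₁ :=
          integral_map measurable_swap.aemeasurable hcn.aestronglyMeasurable
      _ = c₁ := hc₁eq.symm
  have hC : ∫ z : Z, ‖z.2.2 - z.1.2‖ ∂θ = c₂ := by
    calc ∫ z : Z, ‖z.2.2 - z.1.2‖ ∂θ
        = ∫ w, ‖w.2 - w.1‖ ∂(θ.map (fun z : Z => (z.1.2, z.2.2))) :=
          (integral_map hg₂.aemeasurable hcn.aestronglyMeasurable).symm
      _ = ∫ w, ‖w.2 - w.1‖ ∂(π₂.map Prod.swap) := by rw [hmap2]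
      _ = ∫ z, ‖z.1 - z.2‖ ∂π₂ :=
          integral_map measurable_swap.aemeasurable hcn.aestronglyMeasurable
      _ = c₂ := hc₂eq.symm
  have hfinal : W2sqE d μ ν ≤ c + 4 * R * c₁ + 4 * R * c₂ := by
    rw [← hA, ← hB, ← hC]
    exact step1.trans (step2.le.trans (step3.trans step4.le))
  have hW2 : c < W2sqE d μ' ν' + δ := hclt
  have hW1a : c₁ < W1E d μ μ' + δ := hc₁lt
  have hW1b : c₂ < W1E d ν ν' + δ := hc₂lt
  have hRnn : (0:ℝ) ≤ 4 * R := by linarith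
  have hδε : (1 + 8 * R) * δ = ε := by
    rw [hδdef]; field_simp
  nlinarith [mul_le_mul_of_nonneg_left hW1a.le hRnn, mul_le_mul_of_nonneg_left hW1b.le hRnn]
end key

/-- For probability measures `μ, μ′, ν, ν′` on `ℝ^d` supported in the centered closed ball of
radius `R`, `|W₂²(μ, ν) − W₂²(μ′, ν′)| ≤ 4R·W₁(μ, μ′) + 4R·W₁(ν, ν′)`. -/
theorem stmt13 (d : ℕ) (R : ℝ) (hR : 0 < R)
    (μ μ' ν ν' : Measure (EuclideanSpace ℝ (Fin d)))
    [IsProbabilityMeasure μ] [IsProbabilityMeasure μ']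
    [IsProbabilityMeasure ν] [IsProbabilityMeasure ν']
    (hμ : μ (Metric.closedBall 0 R)ᶜ = 0) (hμ' : μ' (Metric.closedBall 0 R)ᶜ = 0)
    (hν : ν (Metric.closedBall 0 R)ᶜ = 0) (hν' : ν' (Metric.closedBall 0 R)ᶜ = 0) :
    |W2sqE d μ ν - W2sqE d μ' ν'| ≤ 4 * R * W1E d μ μ' + 4 * R * W1E d ν ν' := by
  rw [abs_sub_le_iff]
  constructor
  · have h1 := key hR μ μ' ν ν' hμ hμ' hν hν'
    linarith
  · have h2 := key hR μ' μ ν' ν hμ' hμ hν' hν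
    rw [w1_symm μ' μ, w1_symm ν' ν] at h2
    linarith
end

section
/- Let p, q be probability mass functions on [k] = {1,…,k}, and let π be a coupling of p and q (a nonnegative k × k matrix with row sums p and column sums q) minimizing Σ_{m,ℓ} (m − ℓ)² π(m, ℓ) over all couplings of p and q. Then for every j ∈ [k] there exists l_j ∈ [k] such that for all m with p(m) > 0, the quantity f(m) = Σ_{ℓ=1}^j π(m, ℓ)/p(m) satisfies: f(m) = 1 if m < l_j, f(m) ∈ [0,1] if m = l_j, and f(m) = 0 if m > l_j. -/
open Finset

/-- `π` is a coupling of the PMFs `p, q` on `Fin k`: a nonnegative matrix with row sums `p` and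
column sums `q`. -/
def IsFinCoupling {k : ℕ} (π : Fin k → Fin k → ℝ) (p q : Fin k → ℝ) : Prop :=
  (∀ m ℓ, 0 ≤ π m ℓ) ∧ (∀ m, ∑ ℓ, π m ℓ = p m) ∧ (∀ ℓ, ∑ m, π m ℓ = q ℓ)

lemma key_sum {k : ℕ} (m₁ m₂ ℓ₁ ℓ₂ : Fin k) (g : Fin k → Fin k → ℝ) :
    ∑ m : Fin k, ∑ ℓ : Fin k, g m ℓ *
      (((if m = m₁ then (1:ℝ) else 0) - if m = m₂ then 1 else 0) *
       ((if ℓ = ℓ₂ then (1:ℝ) else 0) - if ℓ = ℓ₁ then 1 else 0)) =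
    g m₁ ℓ₂ - g m₁ ℓ₁ - (g m₂ ℓ₂ - g m₂ ℓ₁) := by
  simp [mul_sub, sub_mul, mul_ite, ite_mul, Finset.sum_sub_distrib, Finset.sum_ite_eq']
  ring

lemma mono_lemma {k : ℕ} (p q : Fin k → ℝ)
    (π : Fin k → Fin k → ℝ) (hπ : IsFinCoupling π p q)
    (hopt : ∀ π' : Fin k → Fin k → ℝ, IsFinCoupling π' p q →
      ∑ m : Fin k, ∑ ℓ : Fin k, (((m : ℕ) : ℝ) - ((ℓ : ℕ) : ℝ)) ^ 2 * π m ℓ ≤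
        ∑ m : Fin k, ∑ ℓ : Fin k, (((m : ℕ) : ℝ) - ((ℓ : ℕ) : ℝ)) ^ 2 * π' m ℓ)
    (m₁ m₂ ℓ₁ ℓ₂ : Fin k) (hm : m₁ < m₂) (hl : ℓ₂ < ℓ₁) :
    π m₁ ℓ₁ = 0 ∨ π m₂ ℓ₂ = 0 := by
  obtain ⟨hnn, hrow, hcol⟩ := hπ
  by_contra h
  push_neg at h
  obtain ⟨h1, h2⟩ := h
  have hp1 : 0 < π m₁ ℓ₁ := lt_of_le_of_ne (hnn _ _) (Ne.symm h1)
  have hp2 : 0 < π m₂ ℓ₂ := lt_of_le_of_ne (hnn _ _) (Ne.symm h2)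
  set ε := min (π m₁ ℓ₁) (π m₂ ℓ₂) with hε
  have hεpos : 0 < ε := lt_min hp1 hp2
  have hm12 : m₁ ≠ m₂ := ne_of_lt hm
  have hl12 : ℓ₂ ≠ ℓ₁ := ne_of_lt hl
  set π' : Fin k → Fin k → ℝ := fun m ℓ => π m ℓ + ε *
      (((if m = m₁ then (1:ℝ) else 0) - if m = m₂ then 1 else 0) *
       ((if ℓ = ℓ₂ then (1:ℝ) else 0) - if ℓ = ℓ₁ then 1 else 0)) with hπ'def
  have hcoup : IsFinCoupling π' p q := by
    refine ⟨?_, ?_, ?_⟩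
    · intro m ℓ
      simp only [hπ'def]
      by_cases e1 : m = m₁ <;> by_cases e2 : m = m₂ <;>
        by_cases e3 : ℓ = ℓ₂ <;> by_cases e4 : ℓ = ℓ₁ <;>
        first
        | exact absurd (e1.symm.trans e2) hm12
        | exact absurd (e3.symm.trans e4) hl12
        | (simp [e1, e2, e3, e4, hm12, hl12, hm12.symm, hl12.symm] <;>
           nlinarith [hnn m ℓ, hnn m₁ ℓ₁, hnn m₂ ℓ₂, hnn m₁ ℓ₂, hnn m₂ ℓ₁, hnn m₁ ℓ, hnn m₂ ℓ, hnn m ℓ₁, hnn m ℓ₂, hεpos,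
          min_le_left (π m₁ ℓ₁) (π m₂ ℓ₂), min_le_right (π m₁ ℓ₁) (π m₂ ℓ₂)])
    · intro m
      simp only [hπ'def]
      rw [Finset.sum_add_distrib, hrow m]
      have : ∑ ℓ : Fin k, ε *
        (((if m = m₁ then (1:ℝ) else 0) - if m = m₂ then 1 else 0) *
         ((if ℓ = ℓ₂ then (1:ℝ) else 0) - if ℓ = ℓ₁ then 1 else 0)) = 0 := by
        rw [← Finset.mul_sum]
        simp [← Finset.mul_sum, Finset.sum_sub_distrib, Finset.sum_ite_eq']
      rw [this, add_zero]
    · intro ℓ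
      simp only [hπ'def]
      rw [Finset.sum_add_distrib, hcol ℓ]
      have : ∑ m : Fin k, ε *
        (((if m = m₁ then (1:ℝ) else 0) - if m = m₂ then 1 else 0) *
         ((if ℓ = ℓ₂ then (1:ℝ) else 0) - if ℓ = ℓ₁ then 1 else 0)) = 0 := by
        have : ∀ m : Fin k, ε *
          (((if m = m₁ then (1:ℝ) else 0) - if m = m₂ then 1 else 0) *
           ((if ℓ = ℓ₂ then (1:ℝ) else 0) - if ℓ = ℓ₁ then 1 else 0)) =
          (ε * ((if ℓ = ℓ₂ then (1:ℝ) else 0) - if ℓ = ℓ₁ then 1 else 0)) *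
          (((if m = m₁ then (1:ℝ) else 0) - if m = m₂ then 1 else 0)) := by
          intro m; ring
        simp only [this, ← Finset.mul_sum, Finset.sum_sub_distrib, Finset.sum_ite_eq']
        simp
      rw [this, add_zero]
  have hco := hopt π' hcoup
  have hexp : ∑ m : Fin k, ∑ ℓ : Fin k, (((m : ℕ) : ℝ) - ((ℓ : ℕ) : ℝ)) ^ 2 * π' m ℓ =
      (∑ m : Fin k, ∑ ℓ : Fin k, (((m : ℕ) : ℝ) - ((ℓ : ℕ) : ℝ)) ^ 2 * π m ℓ) +
      ε * ((((m₁:ℕ):ℝ) - ((ℓ₂:ℕ):ℝ))^2 - (((m₁:ℕ):ℝ) - ((ℓ₁:ℕ):ℝ))^2 -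
        ((((m₂:ℕ):ℝ) - ((ℓ₂:ℕ):ℝ))^2 - (((m₂:ℕ):ℝ) - ((ℓ₁:ℕ):ℝ))^2)) := by
    have hks := key_sum m₁ m₂ ℓ₁ ℓ₂ (fun m ℓ => ε * (((m : ℕ) : ℝ) - ((ℓ : ℕ) : ℝ)) ^ 2)
    have hre : ∀ m ℓ : Fin k, (((m : ℕ) : ℝ) - ((ℓ : ℕ) : ℝ)) ^ 2 * π' m ℓ =
        (((m : ℕ) : ℝ) - ((ℓ : ℕ) : ℝ)) ^ 2 * π m ℓ +
        (ε * (((m : ℕ) : ℝ) - ((ℓ : ℕ) : ℝ)) ^ 2) *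
          (((if m = m₁ then (1:ℝ) else 0) - if m = m₂ then 1 else 0) *
           ((if ℓ = ℓ₂ then (1:ℝ) else 0) - if ℓ = ℓ₁ then 1 else 0)) := by
      intro m ℓ; simp only [hπ'def]; ring
    simp only [hre, Finset.sum_add_distrib, hks]
    ring
  have hcast1 : ((m₁:ℕ):ℝ) < ((m₂:ℕ):ℝ) := by exact_mod_cast hm
  have hcast2 : ((ℓ₂:ℕ):ℝ) < ((ℓ₁:ℕ):ℝ) := by exact_mod_cast hl
  rw [hexp] at hco
  nlinarith [mul_pos hεpos (mul_pos (sub_pos.2 hcast1) (sub_pos.2 hcast2))]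

/-- Monotonicity of optimal transports under the squared cost: if `π` minimizes
`Σ_{m,ℓ} (m − ℓ)² π(m,ℓ)` over couplings of `p` and `q`, then for every `j` there is a threshold
`l_j` such that `f(m) = Σ_{ℓ≤j} π(m,ℓ)/p(m)` equals `1` below `l_j`, lies in `[0,1]` at `l_j`,
and equals `0` above `l_j`, for every `m` with `p(m) > 0`. -/
theorem stmt14 {k : ℕ} (p q : Fin k → ℝ)
    (hp : (∀ m, 0 ≤ p m) ∧ ∑ m, p m = 1) (hq : (∀ ℓ, 0 ≤ q ℓ) ∧ ∑ ℓ, q ℓ = 1)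
    (π : Fin k → Fin k → ℝ) (hπ : IsFinCoupling π p q)
    (hopt : ∀ π' : Fin k → Fin k → ℝ, IsFinCoupling π' p q →
      ∑ m : Fin k, ∑ ℓ : Fin k, (((m : ℕ) : ℝ) - ((ℓ : ℕ) : ℝ)) ^ 2 * π m ℓ ≤
        ∑ m : Fin k, ∑ ℓ : Fin k, (((m : ℕ) : ℝ) - ((ℓ : ℕ) : ℝ)) ^ 2 * π' m ℓ) :
    ∀ j : Fin k, ∃ lj : Fin k, ∀ m : Fin k, 0 < p m →
      (m < lj → (∑ ℓ ∈ Finset.Iic j, π m ℓ) / p m = 1) ∧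
      (m = lj → 0 ≤ (∑ ℓ ∈ Finset.Iic j, π m ℓ) / p m ∧
        (∑ ℓ ∈ Finset.Iic j, π m ℓ) / p m ≤ 1) ∧
      (lj < m → (∑ ℓ ∈ Finset.Iic j, π m ℓ) / p m = 0) := by
  intro j
  obtain ⟨hnn, hrow, hcol⟩ := hπ
  have hmono := mono_lemma p q π ⟨hnn, hrow, hcol⟩ hopt
  -- basic bounds on the partial sums
  have hS0 : ∀ m : Fin k, 0 ≤ ∑ ℓ ∈ Finset.Iic j, π m ℓ := fun m =>
    Finset.sum_nonneg fun ℓ _ => hnn m ℓ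
  have hS1 : ∀ m : Fin k, ∑ ℓ ∈ Finset.Iic j, π m ℓ ≤ p m := fun m => by
    rw [← hrow m]
    exact Finset.sum_le_sum_of_subset_of_nonneg (Finset.subset_univ _)
      (fun ℓ _ _ => hnn m ℓ)
  -- zero above any row that is not saturated
  have hzero : ∀ m₁ m₂ : Fin k, m₁ < m₂ →
      (∑ ℓ ∈ Finset.Iic j, π m₁ ℓ) < p m₁ → ∑ ℓ ∈ Finset.Iic j, π m₂ ℓ = 0 := by
    intro m₁ m₂ hmlt hlt
    -- there is ℓ₁ > j with π m₁ ℓ₁ > 0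
    have hsplit := Finset.sum_add_sum_compl (Finset.Iic j) (fun ℓ => π m₁ ℓ)
    rw [hrow m₁] at hsplit
    have hcpos : 0 < ∑ ℓ ∈ (Finset.Iic j)ᶜ, π m₁ ℓ := by linarith
    obtain ⟨ℓ₁, hℓ₁mem, hℓ₁pos⟩ : ∃ ℓ₁ ∈ (Finset.Iic j)ᶜ, 0 < π m₁ ℓ₁ := by
      by_contra hcon
      push_neg at hcon
      have : ∑ ℓ ∈ (Finset.Iic j)ᶜ, π m₁ ℓ ≤ 0 :=
        Finset.sum_nonpos fun ℓ hℓ => hcon ℓ hℓ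
      linarith
    have hjℓ₁ : j < ℓ₁ := by
      simpa [Finset.mem_compl, Finset.mem_Iic] using hℓ₁mem
    apply Finset.sum_eq_zero
    intro ℓ hℓ
    have hℓj : ℓ ≤ j := Finset.mem_Iic.mp hℓ
    rcases hmono m₁ m₂ ℓ₁ ℓ hmlt (lt_of_le_of_lt hℓj hjℓ₁) with h | h
    · exact absurd h (ne_of_gt hℓ₁pos)
    · exact h
  have hk : 0 < k := j.pos
  by_cases hA : ∃ m : Fin k, 0 < p m ∧ (∑ ℓ ∈ Finset.Iic j, π m ℓ) < p m
  · -- take the minimum such m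
    set A := Finset.univ.filter
      (fun m : Fin k => 0 < p m ∧ (∑ ℓ ∈ Finset.Iic j, π m ℓ) < p m) with hAdef
    have hAne : A.Nonempty := by
      obtain ⟨m, hm1, hm2⟩ := hA
      exact ⟨m, by simp [hAdef, hm1, hm2]⟩
    refine ⟨A.min' hAne, fun m hpm => ⟨?_, ?_, ?_⟩⟩
    · intro hlt
      have hmA : m ∉ A := fun hmem => absurd (A.min'_le m hmem) (not_le.2 hlt)
      have : ¬ ((∑ ℓ ∈ Finset.Iic j, π m ℓ) < p m) := by
        intro hc; exact hmA (by simp [hAdef, hpm, hc])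
      have heq : ∑ ℓ ∈ Finset.Iic j, π m ℓ = p m := le_antisymm (hS1 m) (not_lt.1 this)
      rw [heq, div_self (ne_of_gt hpm)]
    · intro _
      exact ⟨div_nonneg (hS0 m) hpm.le, (div_le_one hpm).2 (hS1 m)⟩
    · intro hlt
      have hminA := A.min'_mem hAne
      simp only [hAdef, Finset.mem_filter] at hminA
      rw [hzero (A.min' hAne) m hlt hminA.2.2, zero_div]
  · push_neg at hA
    refine ⟨⟨k - 1, by omega⟩, fun m hpm => ⟨?_, ?_, ?_⟩⟩
    · intro _
      have heq : ∑ ℓ ∈ Finset.Iic j, π m ℓ = p m := le_antisymm (hS1 m) (hA m hpm)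
      rw [heq, div_self (ne_of_gt hpm)]
    · intro _
      exact ⟨div_nonneg (hS0 m) hpm.le, (div_le_one hpm).2 (hS1 m)⟩
    · intro hlt
      exact absurd hlt (by simp [Fin.lt_def]; omega)
end
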